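/- Let G be a connected undirected graph with oriented edges containing a cycle of length c through a vertex v such that the difference D between clockwise and anticlockwise edges satisfies D ≢ 0 (mod 3). Then in the ancillary graph H (with vertex set V × Z/3 and edges (u_b, v_{b+1 mod 3}) for each oriented edge (u,v)), the three vertices v_0, v_1, v_2 all lie on a single cycle of length 3c in H. -/

import Mathlib

/-!
Walk around the base cycle starting at `v` and record a height in `ZMod 3`: `+1` along an edge
traversed in its orientation, `-1` against it. This lifts the walk to `H`, and one round raises
the height by `D = p - q ≠ 0`. Hence after three rounds the lift closes up, passing through
`(v, 0)`, `(v, D)`, `(v, 2D)`, which are all three lifts of `v`. Its `3n` vertices are distinct: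
two with the same base vertex are `t` rounds apart for some `t ∈ {1, 2}`, so their heights
differ by `tD ≠ 0`.
-/

/-- The ancillary triple-cover graph `H`: vertices are `V × ZMod 3`, and each
oriented edge `u → v` of the base graph (given by `dir`) yields the edges
`(u_b, v_{b+1})` for `b ∈ ZMod 3`. -/
def ancillary3 {V : Type} (dir : V → V → Prop) : SimpleGraph (V × ZMod 3) where
  Adj a b := (dir a.1 b.1 ∧ b.2 = a.2 + 1) ∨ (dir b.1 a.1 ∧ a.2 = b.2 + 1)
  symm := by
    constructor
    rintro a b (⟨h1, h2⟩ | ⟨h1, h2⟩)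
    · exact Or.inr ⟨h1, h2⟩
    · exact Or.inl ⟨h1, h2⟩
  loopless := by
    constructor
    rintro a (⟨-, h⟩ | ⟨-, h⟩) <;> simp at h

namespace SimpleGraph

variable {α : Type*} {H : SimpleGraph α} {g : ℕ → α}

def Walk.ofSeq (hg : ∀ j, H.Adj (g j) (g (j + 1))) : (k : ℕ) → H.Walk (g 0) (g k)
  | 0 => .nil
  | k + 1 => (Walk.ofSeq hg k).concat (hg k)

@[simp]
lemma Walk.length_ofSeq (hg : ∀ j, H.Adj (g j) (g (j + 1))) (k : ℕ) :
    (Walk.ofSeq hg k).length = k := by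
  induction k with
  | zero => rfl
  | succ k ih => simp [Walk.ofSeq, ih]

lemma Walk.support_ofSeq (hg : ∀ j, H.Adj (g j) (g (j + 1))) (k : ℕ) :
    (Walk.ofSeq hg k).support = (List.range (k + 1)).map g := by
  induction k with
  | zero => simp [Walk.ofSeq]
  | succ k ih => simp [Walk.ofSeq, ih, List.range_succ]

theorem exists_isCycle_of_periodic (hg : ∀ j, H.Adj (g j) (g (j + 1))) {m : ℕ} (hm : 3 ≤ m)
    (hper : Function.Periodic g m) (hinj : Set.InjOn g (Set.Iio m)) :
    ∃ w : H.Walk (g 0) (g 0), w.IsCycle ∧ w.length = m ∧ ∀ j, g j ∈ w.support := by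
  have hgm : g m = g 0 := by simpa using hper 0
  set w := (Walk.ofSeq hg m).copy rfl hgm
  have hlen : w.length = m := by simp [w]
  have hsupp : w.support = (List.range (m + 1)).map g := by simp [w, Walk.support_ofSeq]
  refine ⟨w, ?_, hlen, fun j => ?_⟩
  · refine Walk.isCycle_iff_isPath_tail_and_le_length.mpr ⟨?_, hlen ▸ hm⟩
    have hnil : ¬ w.Nil := by rw [← Walk.length_eq_zero_iff, hlen]; omega
    rw [Walk.isPath_def, Walk.support_tail_of_not_nil _ hnil, hsupp, List.range_succ_eq_map,
      List.map_cons, List.tail_cons, List.map_map]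
    refine List.nodup_range.map_on fun x hx y hy hxy => ?_
    rw [List.mem_range] at hx hy
    have hmod : (x + 1) % m = (y + 1) % m := by
      refine hinj (Nat.mod_lt _ (by omega)) (Nat.mod_lt _ (by omega)) ?_
      simpa [hper.map_mod_nat] using hxy
    have := Nat.ModEq.add_right_cancel' 1 hmod
    rwa [Nat.ModEq, Nat.mod_eq_of_lt hx, Nat.mod_eq_of_lt hy] at this
  · rw [hsupp, ← hper.map_mod_nat]
    have := Nat.mod_lt j (by omega : 0 < m)
    exact List.mem_map_of_mem (List.mem_range.mpr (by omega))

end SimpleGraph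

open Finset Function

lemma ZMod.sum_range_add_natCast {n : ℕ} [NeZero n] {M : Type*} [AddCommMonoid M]
    (F : ZMod n → M) (i₀ : ZMod n) : ∑ t ∈ range n, F (i₀ + t) = ∑ i, F i := by
  refine Eq.trans ?_ (Equiv.sum_comp (Equiv.addLeft i₀) F)
  refine sum_nbij' Nat.cast ZMod.val (by simp) (by simp [ZMod.val_lt]) ?_ (by simp) (by simp)
  intro t ht
  simp [ZMod.val_natCast_of_lt (mem_range.mp ht)]

section Lift

variable {V : Type} (dir : V → V → Prop) [DecidableRel dir]

def orientSign (u v : V) : ZMod 3 := if dir u v then 1 else -1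

def liftHeight (s : ℕ → V) (j : ℕ) : ZMod 3 := ∑ t ∈ range j, orientSign dir (s t) (s (t + 1))

def liftSeq (s : ℕ → V) (j : ℕ) : V × ZMod 3 := (s j, liftHeight dir s j)

variable {dir} {s : ℕ → V} {n : ℕ}

lemma sum_orientSign {ι : Type*} [Fintype ι] (a b : ι → V)
    (hab : ∀ i, dir (a i) (b i) ∨ dir (b i) (a i)) (hone : ∀ u v, ¬ (dir u v ∧ dir v u)) :
    ∑ i, orientSign dir (a i) (b i) =
      (#{i | dir (a i) (b i)} : ZMod 3) - #{i | dir (b i) (a i)} := by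
  have hback : (univ.filter fun i => ¬ dir (a i) (b i)) = univ.filter fun i => dir (b i) (a i) :=
    filter_congr fun i _ => ⟨(hab i).resolve_left, fun h h' => hone _ _ ⟨h', h⟩⟩
  simp only [orientSign, sum_ite, sum_const, hback, nsmul_eq_mul, mul_one, mul_neg, sub_eq_add_neg]

lemma ancillary3_adj_liftSeq (hs : ∀ j, dir (s j) (s (j + 1)) ∨ dir (s (j + 1)) (s j)) (j : ℕ) :
    (ancillary3 dir).Adj (liftSeq dir s j) (liftSeq dir s (j + 1)) := by
  by_cases h : dir (s j) (s (j + 1))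
  · exact Or.inl ⟨h, by simp [liftSeq, liftHeight, sum_range_succ, orientSign, h]⟩
  · refine Or.inr ⟨(hs j).resolve_left h, ?_⟩
    simp [liftSeq, liftHeight, sum_range_succ, orientSign, h]

lemma liftHeight_period_add (hs : Periodic s n) (j : ℕ) :
    liftHeight dir s (n + j) = liftHeight dir s n + liftHeight dir s j := by
  have hshift : ∀ x, s (n + x) = s x := fun x => by rw [add_comm, hs]
  rw [liftHeight, liftHeight, liftHeight, sum_range_add]
  simp only [hshift, add_assoc]

lemma liftHeight_mul_add (hs : Periodic s n) (t j : ℕ) :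
    liftHeight dir s (t * n + j) = t * liftHeight dir s n + liftHeight dir s j := by
  induction t with
  | zero => simp
  | succ t ih =>
    rw [add_mul, one_mul, add_comm _ n, add_assoc, liftHeight_period_add hs, ih]
    push_cast
    ring

lemma liftSeq_periodic (hs : Periodic s n) : Periodic (liftSeq dir s) (3 * n) := by
  intro j
  refine Prod.ext ((hs.nat_mul 3) j) ?_
  have h3 : ((3 : ℕ) : ZMod 3) = 0 := rfl
  simp only [liftSeq, add_comm j, liftHeight_mul_add hs, h3, zero_mul, zero_add]

lemma liftSeq_injOn (hs : Periodic s n) (hinj : Set.InjOn s (Set.Iio n))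
    (hD : liftHeight dir s n ≠ 0) : Set.InjOn (liftSeq dir s) (Set.Iio (3 * n)) := by
  intro j hj k hk hjk
  simp only [Set.mem_Iio] at hj hk
  have hn : 0 < n := by omega
  obtain ⟨hsjk, hhjk⟩ := Prod.ext_iff.mp hjk
  have hmod : j % n = k % n :=
    hinj (Nat.mod_lt _ hn) (Nat.mod_lt _ hn) (by rwa [hs.map_mod_nat, hs.map_mod_nat])
  have hround : ∀ i,
      liftHeight dir s i = (i / n : ℕ) * liftHeight dir s n + liftHeight dir s (i % n) :=
    fun i => by conv_lhs => rw [← Nat.div_add_mod' i n, liftHeight_mul_add hs]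
  have hdiv : j / n = k / n := by
    simp only [liftSeq, hround j, hround k, hmod, add_left_inj] at hhjk
    have := (ZMod.natCast_eq_natCast_iff' _ _ _).mp (mul_right_cancel₀ hD hhjk)
    rwa [Nat.mod_eq_of_lt (Nat.div_lt_of_lt_mul (by omega)),
      Nat.mod_eq_of_lt (Nat.div_lt_of_lt_mul (by omega))] at this
  rw [← Nat.div_add_mod' j n, ← Nat.div_add_mod' k n, hdiv, hmod]

lemma liftSeq_mul_period (hs : Periodic s n) (t : ℕ) :
    liftSeq dir s (t * n) = (s 0, t * liftHeight dir s n) :=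
  Prod.ext (hs.nat_mul t).eq ((liftHeight_mul_add hs t 0).trans (by simp [liftHeight]))

lemma liftHeight_eq_card_sub_card [NeZero n] (c : ZMod n → V) (i₀ : ZMod n)
    (hc : ∀ i, dir (c i) (c (i + 1)) ∨ dir (c (i + 1)) (c i))
    (hone : ∀ u v, ¬ (dir u v ∧ dir v u)) :
    liftHeight dir (fun j : ℕ => c (i₀ + j)) n =
      (#{i | dir (c i) (c (i + 1))} : ZMod 3) - #{i | dir (c (i + 1)) (c i)} := by
  have hstep : ∀ t : ℕ, i₀ + ((t + 1 : ℕ) : ZMod n) = i₀ + t + 1 := fun t => by push_cast; ring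
  simp only [liftHeight, hstep]
  rw [ZMod.sum_range_add_natCast (fun i => orientSign dir (c i) (c (i + 1))) i₀]
  exact sum_orientSign _ _ hc hone

end Lift

theorem stmt_3_general {V : Type} (G : SimpleGraph V)
    (dir : V → V → Prop) [DecidableRel dir]
    (horient : ∀ u v, G.Adj u v ↔ (dir u v ∨ dir v u))
    (hone : ∀ u v, ¬ (dir u v ∧ dir v u))
    (n : ℕ) [NeZero n]
    (c : ZMod n → V) (hinj : Function.Injective c)
    (hadj : ∀ i, G.Adj (c i) (c (i + 1)))
    (v : V) (hv : ∃ i, c i = v)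
    (p q : ℕ)
    (hp : p = (Finset.univ.filter fun i : ZMod n => dir (c i) (c (i + 1))).card)
    (hq : q = (Finset.univ.filter fun i : ZMod n => dir (c (i + 1)) (c i)).card)
    (hD : ¬ ((3 : ℤ) ∣ ((p : ℤ) - (q : ℤ)))) :
    ∃ w : (ancillary3 dir).Walk (v, 0) (v, 0), w.IsCycle ∧ w.length = 3 * n ∧
      ∀ b : ZMod 3, (v, b) ∈ w.support := by
  obtain ⟨i₀, rfl⟩ := hv
  set s : ℕ → V := fun j => c (i₀ + j)
  have hc : ∀ i, dir (c i) (c (i + 1)) ∨ dir (c (i + 1)) (c i) :=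
    fun i => (horient _ _).mp (hadj i)
  have hs : Periodic s n := fun j => by simp [s]
  have hs_inj : Set.InjOn s (Set.Iio n) := fun j hj k hk hjk => by
    simpa [Nat.mod_eq_of_lt hj, Nat.mod_eq_of_lt hk, ZMod.natCast_eq_natCast_iff'] using hinj hjk
  have hs_adj : ∀ j, dir (s j) (s (j + 1)) ∨ dir (s (j + 1)) (s j) := fun j => by
    simpa [s, add_assoc] using hc (i₀ + j)
  have hD0 : liftHeight dir s n ≠ 0 := by
    intro h
    rw [show liftHeight dir s n = _ from liftHeight_eq_card_sub_card c i₀ hc hone, ← hp, ← hq,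
      sub_eq_zero] at h
    exact hD ((ZMod.intCast_zmod_eq_zero_iff_dvd _ 3).mp (by push_cast; rw [h, sub_self]))
  obtain ⟨w, hcyc, hlen, hmem⟩ := SimpleGraph.exists_isCycle_of_periodic
    (ancillary3_adj_liftSeq hs_adj) (by have := NeZero.pos n; omega) (liftSeq_periodic hs)
    (liftSeq_injOn hs hs_inj hD0)
  have h0 : liftSeq dir s 0 = (c i₀, 0) := by simp [liftSeq, liftHeight, s]
  refine ⟨w.copy h0 h0, by simpa using hcyc, by simpa using hlen, fun b => ?_⟩
  obtain ⟨t, ht⟩ : ∃ t : ℕ, (t : ZMod 3) * liftHeight dir s n = b :=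
    ⟨(b / liftHeight dir s n).val, by rw [ZMod.natCast_zmod_val, div_mul_cancel₀ _ hD0]⟩
  have hvisit := hmem (t * n)
  rw [liftSeq_mul_period hs, ht] at hvisit
  simpa [s] using hvisit

theorem stmt_3 {V : Type} (G : SimpleGraph V) (hG : G.Connected)
    (dir : V → V → Prop) [DecidableRel dir]
    (horient : ∀ u v, G.Adj u v ↔ (dir u v ∨ dir v u))
    (hone : ∀ u v, ¬ (dir u v ∧ dir v u))
    (n : ℕ) [NeZero n] (hn : 3 ≤ n)
    (c : ZMod n → V) (hinj : Function.Injective c)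
    (hadj : ∀ i, G.Adj (c i) (c (i + 1)))
    (v : V) (hv : ∃ i, c i = v)
    (p q : ℕ)
    (hp : p = (Finset.univ.filter fun i : ZMod n => dir (c i) (c (i + 1))).card)
    (hq : q = (Finset.univ.filter fun i : ZMod n => dir (c (i + 1)) (c i)).card)
    (hD : ¬ ((3 : ℤ) ∣ ((p : ℤ) - (q : ℤ)))) :
    ∃ w : (ancillary3 dir).Walk (v, 0) (v, 0), w.IsCycle ∧ w.length = 3 * n ∧
      ∀ b : ZMod 3, (v, b) ∈ w.support :=
  stmt_3_general G dir horient hone n c hinj hadj v hv p q hp hq hD
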